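/- Let K be a field extension of C and M a nonzero A-submodule of K, where A is a C-subalgebra of K. Then the ring of differential operators D_A(M) (defined inductively inside End_C(M)) coincides with {D ∈ D(K) : D(f) ∈ M for all f ∈ M}, where differential operators on K are extended/restricted in the natural way. -/

import Mathlib

set_option synthInstance.maxHeartbeats 1000000
set_option maxHeartbeats 1000000

variable (A M : Type*)

/-- Scalar multiplication by `a ∈ A` as a `ℂ`-linear endomorphism of `M`. -/
noncomputable def aSmul [CommRing A] [Algebra ℂ A] [AddCommGroup M] [Module ℂ M]
    [Module A M] [IsScalarTower ℂ A M] (a : A) : M →ₗ[ℂ] M where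
  toFun m := a • m
  map_add' := smul_add a
  map_smul' c m := by
    simp only [RingHom.id_apply]
    rw [← algebraMap_smul A c m, ← mul_smul, mul_comm, mul_smul, algebraMap_smul]

/-- `IsDiffOp ℂ A M n D` : `D` is a (`ℂ`-linear) differential operator of order `≤ n` on
the `A`-module `M` in the inductive sense: order `≤ 0` means `A`-linearity, and `D` has
order `≤ n+1` iff `[D, a]` has order `≤ n` for all `a ∈ A`. -/
def IsDiffOp [CommRing A] [Algebra ℂ A] [AddCommGroup M] [Module ℂ M]
    [Module A M] [IsScalarTower ℂ A M] : ℕ → (M →ₗ[ℂ] M) → Prop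
  | 0, D => ∀ (a : A) (m : M), D (a • m) = a • D m
  | n + 1, D => ∀ a : A, IsDiffOp n (D ∘ₗ aSmul A M a - aSmul A M a ∘ₗ D)

variable {K : Type*} [Field K] [Algebra ℂ K] (S : Subalgebra ℂ K)
  (N : Submodule ↥S K)

/-- The restriction to `M ⊆ K` of an operator `D` on `K` preserving `M`. -/
noncomputable def restrictMap (D : K →ₗ[ℂ] K) (h : ∀ x ∈ N, D x ∈ N) :
    ↥N →ₗ[ℂ] ↥N where
  toFun x := ⟨D x, h x x.2⟩
  map_add' x y := by ext; simp
  map_smul' c x := by ext; simp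

section Generic

variable [CommRing A] [Algebra ℂ A] [AddCommGroup M] [Module ℂ M]
    [Module A M] [IsScalarTower ℂ A M]

noncomputable def brak (D : M →ₗ[ℂ] M) (a : A) : M →ₗ[ℂ] M :=
  D ∘ₗ aSmul A M a - aSmul A M a ∘ₗ D

lemma brak_apply (D : M →ₗ[ℂ] M) (a : A) (m : M) :
    brak A M D a m = D (a • m) - a • D m := rfl

lemma aSmul_apply (a : A) (m : M) : aSmul A M a m = a • m := rfl

lemma isDiffOp_zero_iff (D : M →ₗ[ℂ] M) :
    IsDiffOp A M 0 D ↔ ∀ (a : A) (m : M), D (a • m) = a • D m := Iff.rfl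

lemma isDiffOp_succ_iff (n : ℕ) (D : M →ₗ[ℂ] M) :
    IsDiffOp A M (n + 1) D ↔ ∀ a : A, IsDiffOp A M n (brak A M D a) := Iff.rfl

lemma isDiffOp_zero (n : ℕ) : IsDiffOp A M n 0 := by
  induction n with
  | zero => intro a m; simp
  | succ n ih =>
    rw [isDiffOp_succ_iff]
    intro a
    have : brak A M (0 : M →ₗ[ℂ] M) a = 0 := by
      ext m; simp [brak_apply]
    rw [this]; exact ih

lemma IsDiffOp.sub {n : ℕ} {D D' : M →ₗ[ℂ] M} (h : IsDiffOp A M n D)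
    (h' : IsDiffOp A M n D') : IsDiffOp A M n (D - D') := by
  induction n generalizing D D' with
  | zero => intro a m; simp [h a m, h' a m, smul_sub]
  | succ n ih =>
    rw [isDiffOp_succ_iff] at h h' ⊢
    intro a
    have e : brak A M (D - D') a = brak A M D a - brak A M D' a := by
      ext m; simp [brak_apply, smul_sub]; abel
    rw [e]; exact ih (h a) (h' a)

lemma IsDiffOp.add {n : ℕ} {D D' : M →ₗ[ℂ] M} (h : IsDiffOp A M n D)
    (h' : IsDiffOp A M n D') : IsDiffOp A M n (D + D') := by
  induction n generalizing D D' with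
  | zero => intro a m; simp [h a m, h' a m, smul_add]
  | succ n ih =>
    rw [isDiffOp_succ_iff] at h h' ⊢
    intro a
    have e : brak A M (D + D') a = brak A M D a + brak A M D' a := by
      ext m; simp [brak_apply, smul_add]; abel
    rw [e]; exact ih (h a) (h' a)

lemma IsDiffOp.mono {n : ℕ} {D : M →ₗ[ℂ] M} (h : IsDiffOp A M n D) :
    IsDiffOp A M (n + 1) D := by
  induction n generalizing D with
  | zero =>
    rw [isDiffOp_succ_iff]
    intro a
    have : brak A M D a = 0 := by
      ext m; simp [brak_apply, h a m]
    rw [this]; exact isDiffOp_zero A M 0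
  | succ n ih =>
    rw [isDiffOp_succ_iff] at h ⊢
    exact fun a => ih (h a)

lemma IsDiffOp.le {n n' : ℕ} (hle : n ≤ n') {D : M →ₗ[ℂ] M} (h : IsDiffOp A M n D) :
    IsDiffOp A M n' D := by
  induction hle with
  | refl => exact h
  | step _ ih => exact (ih).mono A M

lemma brak_brak_comm (D : M →ₗ[ℂ] M) (a b : A) :
    brak A M (brak A M D a) b = brak A M (brak A M D b) a := by
  ext m
  simp only [brak_apply, map_sub, smul_sub]
  rw [smul_comm a b m, smul_comm b a (D m)]
  abel

lemma IsDiffOp.brakOp {n : ℕ} {D : M →ₗ[ℂ] M} (h : IsDiffOp A M n D) (a : A) :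
    IsDiffOp A M n (brak A M D a) := by
  induction n generalizing D with
  | zero =>
    have : brak A M D a = 0 := by
      ext m; simp [brak_apply, h a m]
    rw [this]; exact isDiffOp_zero A M 0
  | succ n ih =>
    rw [isDiffOp_succ_iff] at h ⊢
    intro b
    rw [brak_brak_comm]
    exact ih (h b)

lemma IsDiffOp.comp_aSmul {n : ℕ} {D : M →ₗ[ℂ] M} (h : IsDiffOp A M n D) (a : A) :
    IsDiffOp A M n (D ∘ₗ aSmul A M a) := by
  induction n generalizing D with
  | zero =>
    intro s m
    have := h s (a • m)
    simp only [LinearMap.comp_apply]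
    show D (a • s • m) = s • D (a • m)
    rw [smul_comm a s m, this]
  | succ n ih =>
    rw [isDiffOp_succ_iff] at h ⊢
    intro b
    have e : brak A M (D ∘ₗ aSmul A M a) b = (brak A M D b) ∘ₗ aSmul A M a := by
      ext m
      show D (a • b • m) - b • D (a • m) = D (b • a • m) - b • D (a • m)
      rw [smul_comm a b]
    rw [e]; exact ih (h b)

lemma IsDiffOp.aSmul_comp {n : ℕ} {D : M →ₗ[ℂ] M} (h : IsDiffOp A M n D) (a : A) :
    IsDiffOp A M n (aSmul A M a ∘ₗ D) := by
  induction n generalizing D with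
  | zero =>
    intro s m
    show a • D (s • m) = s • a • D m
    rw [h s m, smul_comm]
  | succ n ih =>
    rw [isDiffOp_succ_iff] at h ⊢
    intro b
    have e : brak A M (aSmul A M a ∘ₗ D) b = aSmul A M a ∘ₗ (brak A M D b) := by
      ext m
      show a • D (b • m) - b • a • D m = a • (D (b • m) - b • D m)
      rw [smul_sub, smul_comm b a]
    rw [e]; exact ih (h b)

end Generic
section Frac
set_option linter.unusedSectionVars false
variable [IsFractionRing ↥S K]

lemma exists_rep (x : K) : ∃ s a : ↥S, (algebraMap ↥S K s) ≠ 0 ∧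
    algebraMap ↥S K s * x = algebraMap ↥S K a := by
  obtain ⟨⟨a, s⟩, h⟩ := IsLocalization.surj (nonZeroDivisors ↥S) x
  exact ⟨s, a, IsFractionRing.to_map_ne_zero_of_mem_nonZeroDivisors s.2,
    by rw [mul_comm]; exact h⟩

lemma smul_eq_mul' (s : ↥S) (x : K) : s • x = algebraMap ↥S K s * x :=
  Algebra.smul_def s x

-- membership version of rep: every x : K is m / s with m ∈ N
lemma exists_repN (hN : N ≠ ⊥) (x : K) : ∃ (s : ↥S) (m : ↥N),
    (algebraMap ↥S K s) ≠ 0 ∧ algebraMap ↥S K s * x = (m : K) := by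
  obtain ⟨m₀, hm₀N, hm₀⟩ := (Submodule.ne_bot_iff N).mp hN
  obtain ⟨s, a, hs, hx⟩ := exists_rep S (x / m₀)
  refine ⟨s, ⟨algebraMap ↥S K a * m₀, ?_⟩, hs, ?_⟩
  · have : algebraMap ↥S K a * m₀ = a • m₀ := (smul_eq_mul' S a m₀).symm
    rw [this]; exact N.smul_mem a hm₀N
  · show algebraMap ↥S K s * x = algebraMap ↥S K a * m₀
    field_simp at hx
    exact hx.trans (mul_comm _ _)

lemma isDiffOp_zero_mul {D : K →ₗ[ℂ] K} (h : IsDiffOp ↥S K 0 D) (x : K) :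
    D x = x * D 1 := by
  obtain ⟨s, a, hs, hx⟩ := exists_rep S x
  have h1 : D (s • x) = s • D x := h s x
  have h2 : D ((a : ↥S) • (1 : K)) = a • D 1 := h a 1
  rw [smul_eq_mul', smul_eq_mul', hx] at h1
  rw [smul_eq_mul', smul_eq_mul', mul_one] at h2
  rw [h2] at h1
  refine mul_left_cancel₀ hs ?_
  rw [← h1, ← hx]
  ring

lemma vanish0 (hN : N ≠ ⊥) {D : K →ₗ[ℂ] K} (h : IsDiffOp ↥S K 0 D)
    (hv : ∀ x ∈ N, D x = 0) : D = 0 := by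
  obtain ⟨m₀, hm₀N, hm₀⟩ := (Submodule.ne_bot_iff N).mp hN
  have hD1 : D 1 = 0 := by
    have := isDiffOp_zero_mul S h m₀
    rw [hv m₀ hm₀N] at this
    rcases mul_eq_zero.mp this.symm with h' | h'
    · exact absurd h' hm₀
    · exact h'
  ext x
  rw [isDiffOp_zero_mul S h x, hD1, mul_zero]; rfl

lemma vanish (hN : N ≠ ⊥) {n : ℕ} {D : K →ₗ[ℂ] K} (h : IsDiffOp ↥S K n D)
    (hv : ∀ x ∈ N, D x = 0) : D = 0 := by
  induction n generalizing D with
  | zero => exact vanish0 S N hN h hv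
  | succ n ih =>
    rw [isDiffOp_succ_iff] at h
    refine vanish0 S N hN ?_ hv
    intro a x
    have hb : brak ↥S K D a = 0 := by
      refine ih (h a) ?_
      intro y hy
      rw [brak_apply, hv _ (N.smul_mem a hy), hv y hy, smul_zero, sub_zero]
    have hthis := congrFun (congrArg DFunLike.coe hb) x
    rw [brak_apply] at hthis
    simp only [LinearMap.zero_apply] at hthis
    exact sub_eq_zero.mp hthis

lemma ext_on (hN : N ≠ ⊥) {n n' : ℕ} {D D' : K →ₗ[ℂ] K} (h : IsDiffOp ↥S K n D)
    (h' : IsDiffOp ↥S K n' D') (hagree : ∀ x ∈ N, D x = D' x) : D = D' := by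
  have hz : D - D' = 0 := by
    refine vanish S N hN (IsDiffOp.sub ↥S K (h.le ↥S K (le_max_left n n'))
      (h'.le ↥S K (le_max_right n n'))) ?_
    intro x hx
    simp [hagree x hx]
  exact sub_eq_zero.mp hz

lemma coe_smulN (s : ↥S) (m : ↥N) : ((s • m : ↥N) : K) = algebraMap ↥S K s * (m : K) := by
  rw [Submodule.coe_smul]; exact Algebra.smul_def s (m : K)

lemma extend0 (hN : N ≠ ⊥) (E : ↥N →ₗ[ℂ] ↥N) (hE : IsDiffOp ↥S ↥N 0 E) :
    ∃ D : K →ₗ[ℂ] K, IsDiffOp ↥S K 0 D ∧ ∀ m : ↥N, D ↑m = ↑(E m) := by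
  obtain ⟨m₀, hm₀N, hm₀⟩ := (Submodule.ne_bot_iff N).mp hN
  set m₀' : ↥N := ⟨m₀, hm₀N⟩ with hm₀'
  set c : K := (E m₀' : K) / m₀ with hc
  refine ⟨c • (LinearMap.id : K →ₗ[ℂ] K), ?_, ?_⟩
  · intro a x
    show c • (a • x) = a • (c • x)
    rw [smul_eq_mul (α := K), smul_eq_mul (α := K), Algebra.smul_def, Algebra.smul_def]
    ring
  · intro m
    show c • (m : K) = ↑(E m)
    rw [smul_eq_mul (α := K), hc]
    obtain ⟨s, a, hs, hx⟩ := exists_rep S ((m : K) / m₀)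
    have hx' : algebraMap ↥S K s * (m : K) = algebraMap ↥S K a * m₀ := by
      field_simp at hx; exact hx.trans (mul_comm _ _)
    have hsm : s • m = a • m₀' := by
      have h3 : ((s • m : ↥N) : K) = ((a • m₀' : ↥N) : K) := by
        rw [coe_smulN, coe_smulN]; exact hx'
      exact Subtype.coe_injective h3
    have h2 : s • E m = a • E m₀' := by rw [← hE s m, hsm, hE a m₀']
    have h4 : algebraMap ↥S K s * (E m : K) = algebraMap ↥S K a * (E m₀' : K) := by
      have := congrArg (Subtype.val) h2
      rw [coe_smulN, coe_smulN] at this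
      exact this
    rw [div_mul_eq_mul_div, div_eq_iff hm₀]
    refine mul_left_cancel₀ hs ?_
    linear_combination ((E m₀' : K)) * hx' - m₀ * h4

lemma extend (hN : N ≠ ⊥) (n : ℕ) : ∀ (E : ↥N →ₗ[ℂ] ↥N), IsDiffOp ↥S ↥N n E →
    ∃ D : K →ₗ[ℂ] K, IsDiffOp ↥S K n D ∧ ∀ m : ↥N, D ↑m = ↑(E m) := by
  induction n with
  | zero => exact fun E hE => extend0 S N hN E hE
  | succ n ih =>
    intro E hE
    rw [isDiffOp_succ_iff] at hE
    choose F hFdiff hFres using fun a : ↥S => ih _ (hE a)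
    have hFres' : ∀ (a : ↥S) (m : ↥N),
        F a ↑m = ↑(E (a • m)) - algebraMap ↥S K a * ↑(E m) := by
      intro a m
      rw [hFres a m, brak_apply, AddSubgroupClass.coe_sub, coe_smulN]
    have hsym : ∀ a b : ↥S, brak ↥S K (F a) b = brak ↥S K (F b) a := by
      intro a b
      refine ext_on S N hN (IsDiffOp.brakOp ↥S K (hFdiff a) b)
        (IsDiffOp.brakOp ↥S K (hFdiff b) a) ?_
      intro x hx
      lift x to ↥N using hx
      rw [brak_apply, brak_apply]
      simp only [Algebra.smul_def]
      rw [show algebraMap ↥S K b * (x : K) = ((b • x : ↥N) : K) from (coe_smulN S N b x).symm,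
        show algebraMap ↥S K a * (x : K) = ((a • x : ↥N) : K) from (coe_smulN S N a x).symm]
      rw [hFres' a (b • x), hFres' b (a • x), hFres' a x, hFres' b x]
      rw [smul_comm a b x]
      ring
    have hprod : ∀ a b : ↥S, F (a * b) = F a ∘ₗ aSmul ↥S K b + aSmul ↥S K a ∘ₗ F b := by
      intro a b
      refine ext_on S N hN (hFdiff (a * b)) (IsDiffOp.add ↥S K
        (IsDiffOp.comp_aSmul ↥S K (hFdiff a) b) (IsDiffOp.aSmul_comp ↥S K (hFdiff b) a)) ?_
      intro x hx
      lift x to ↥N using hx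
      rw [hFres' (a * b) x]
      simp only [LinearMap.add_apply, LinearMap.comp_apply, aSmul_apply, Algebra.smul_def]
      rw [show algebraMap ↥S K b * (x : K) = ((b • x : ↥N) : K) from (coe_smulN S N b x).symm]
      rw [hFres' a (b • x), hFres' b x, mul_smul, map_mul]
      ring
    choose σ μ hσ hμ using fun x : K => exists_repN S N hN x
    set d : K → K := fun x => (algebraMap ↥S K (σ x))⁻¹ * (↑(E (μ x)) - F (σ x) x) with hd_def
    have hwd : ∀ (x : K) (s s' : ↥S) (m m' : ↥N), algebraMap ↥S K s ≠ 0 →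
        algebraMap ↥S K s' ≠ 0 → algebraMap ↥S K s * x = ↑m → algebraMap ↥S K s' * x = ↑m' →
        (algebraMap ↥S K s)⁻¹ * (↑(E m) - F s x) =
          (algebraMap ↥S K s')⁻¹ * (↑(E m') - F s' x) := by
      intro x s s' m m' hs hs' hm hm'
      have hmm' : s' • m = s • m' := by
        have h3 : ((s' • m : ↥N) : K) = ((s • m' : ↥N) : K) := by
          rw [coe_smulN, coe_smulN]
          linear_combination algebraMap ↥S K s * hm' - algebraMap ↥S K s' * hm
        exact Subtype.coe_injective h3
      have hEc : ((E (s' • m) : ↥N) : K) = ((E (s • m') : ↥N) : K) := by rw [hmm']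
      have h1 := hFres' s' m
      have h2 := hFres' s m'
      have hG := congrArg (fun T : K →ₗ[ℂ] K => T x) (hsym s s')
      simp only [brak_apply, Algebra.smul_def] at hG
      rw [hm, hm'] at hG
      rw [inv_mul_eq_div, inv_mul_eq_div, div_eq_div_iff hs hs']
      linear_combination hG + h1 - h2 + hEc
    have hd_eq : ∀ (z : K) (s : ↥S) (m : ↥N), algebraMap ↥S K s ≠ 0 →
        algebraMap ↥S K s * z = ↑m →
        d z = (algebraMap ↥S K s)⁻¹ * (↑(E m) - F s z) :=
      fun z s m hs hm => hwd z (σ z) s (μ z) m (hσ z) hs (hμ z) hm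
    have hadd : ∀ x y : K, d (x + y) = d x + d y := by
      intro x y
      have hs : algebraMap ↥S K (σ x * σ y) ≠ 0 := by
        rw [map_mul]; exact mul_ne_zero (hσ x) (hσ y)
      have hm : algebraMap ↥S K (σ x * σ y) * (x + y) = ↑(σ y • μ x + σ x • μ y) := by
        rw [Submodule.coe_add, coe_smulN, coe_smulN, map_mul]
        linear_combination algebraMap ↥S K (σ y) * hμ x + algebraMap ↥S K (σ x) * hμ y
      rw [hd_eq (x + y) (σ x * σ y) _ hs hm]
      have hcoe : ((E (σ y • μ x + σ x • μ y) : ↥N) : K) =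
          ↑(E (σ y • μ x)) + ↑(E (σ x • μ y)) := by rw [map_add, Submodule.coe_add]
      have hFab := congrArg (fun T : K →ₗ[ℂ] K => T (x + y)) (hprod (σ x) (σ y))
      simp only [LinearMap.add_apply, LinearMap.comp_apply, aSmul_apply, Algebra.smul_def,
        mul_add, map_add] at hFab
      rw [hμ y] at hFab
      have hGx := congrArg (fun T : K →ₗ[ℂ] K => T x) (hsym (σ x) (σ y))
      simp only [brak_apply, Algebra.smul_def] at hGx
      rw [hμ x] at hGx
      have h1 := hFres' (σ y) (μ x)
      have h2 := hFres' (σ x) (μ y)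
      have key : (↑(E (σ y • μ x)) + ↑(E (σ x • μ y)) - F (σ x * σ y) (x + y) : K) =
          (↑(E (μ x)) - F (σ x) x) * algebraMap ↥S K (σ y) +
          (↑(E (μ y)) - F (σ y) y) * algebraMap ↥S K (σ x) := by
        rw [map_add (F (σ x * σ y)) x y]
        linear_combination - hFab - hGx - h1 - h2
      rw [hcoe, key, map_mul]
      show _ = (algebraMap ↥S K (σ x))⁻¹ * (↑(E (μ x)) - F (σ x) x) +
        (algebraMap ↥S K (σ y))⁻¹ * (↑(E (μ y)) - F (σ y) y)
      field_simp [hσ x, hσ y]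
      rw [div_add_div _ _ (hσ x) (hσ y)]; ring
    have hsmul : ∀ (c : ℂ) (x : K), d (c • x) = c • d x := by
      intro c x
      have hm : algebraMap ↥S K (σ x) * (c • x) = ↑(c • μ x) := by
        rw [Submodule.coe_smul_of_tower, ← hμ x, mul_smul_comm]
      rw [hd_eq (c • x) (σ x) (c • μ x) (hσ x) hm]
      show _ = c • ((algebraMap ↥S K (σ x))⁻¹ * (↑(E (μ x)) - F (σ x) x))
      rw [map_smul E c (μ x), Submodule.coe_smul_of_tower, map_smul (F (σ x)) c x]
      rw [← smul_sub, mul_smul_comm]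
    let Dm : K →ₗ[ℂ] K :=
      { toFun := d
        map_add' := hadd
        map_smul' := fun c x => by rw [RingHom.id_apply]; exact hsmul c x }
    refine ⟨Dm, ?_, ?_⟩
    · rw [isDiffOp_succ_iff]
      intro a
      have hb : brak ↥S K Dm a = F a := by
        apply LinearMap.ext
        intro x
        rw [brak_apply]
        show d (a • x) - a • d x = F a x
        have hm' : algebraMap ↥S K (σ x) * (a • x) = ↑(a • μ x) := by
          rw [coe_smulN, Algebra.smul_def, ← hμ x]; ring
        rw [hd_eq (a • x) (σ x) (a • μ x) (hσ x) hm']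
        show (algebraMap ↥S K (σ x))⁻¹ * (↑(E (a • μ x)) - F (σ x) (a • x)) -
          a • ((algebraMap ↥S K (σ x))⁻¹ * (↑(E (μ x)) - F (σ x) x)) = F a x
        have h2 := hFres' a (μ x)
        have hGx := congrArg (fun T : K →ₗ[ℂ] K => T x) (hsym (σ x) a)
        simp only [brak_apply, Algebra.smul_def] at hGx
        rw [hμ x] at hGx
        rw [Algebra.smul_def a x, Algebra.smul_def a]
        have hinv : (algebraMap ↥S K (σ x))⁻¹ * algebraMap ↥S K (σ x) = 1 := inv_mul_cancel₀ (hσ x)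
        linear_combination -(algebraMap ↥S K (σ x))⁻¹ * (h2 + hGx) + F a x * hinv
      rw [hb]
      exact hFdiff a
    · intro m
      show d ↑m = ↑(E m)
      have h1 : algebraMap ↥S K (1 : ↥S) * (m : K) = ((m : ↥N) : K) := by
        rw [map_one, one_mul]
      rw [hd_eq ↑m 1 m (by rw [map_one]; exact one_ne_zero) h1, map_one, inv_one, one_mul]
      rw [hFres' 1 m, one_smul, map_one, one_mul, sub_sub_cancel]

lemma restrict_diffop (n : ℕ) : ∀ (D : K →ₗ[ℂ] K) (h : ∀ x ∈ N, D x ∈ N),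
    IsDiffOp ↥S K n D → IsDiffOp ↥S ↥N n (restrictMap S N D h) := by
  induction n with
  | zero =>
    intro D h hD a m
    have hc : ((restrictMap S N D h) (a • m) : K) = ((a • restrictMap S N D h m : ↥N) : K) := by
      show D ↑(a • m) = ↑(a • restrictMap S N D h m)
      rw [coe_smulN, coe_smulN]
      show D (algebraMap ↥S K a * ↑m) = algebraMap ↥S K a * D ↑m
      have := hD a ↑m
      rwa [Algebra.smul_def, Algebra.smul_def] at this
    exact Subtype.coe_injective hc
  | succ n ih =>
    intro D h hD
    rw [isDiffOp_succ_iff] at hD ⊢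
    intro a
    have h' : ∀ x ∈ N, (brak ↥S K D a) x ∈ N := by
      intro x hx
      rw [brak_apply]
      exact N.sub_mem (h _ (N.smul_mem a hx)) (N.smul_mem a (h x hx))
    have e : restrictMap S N (brak ↥S K D a) h' = brak ↥S ↥N (restrictMap S N D h) a := by
      apply LinearMap.ext; intro m
      apply Subtype.coe_injective
      show (brak ↥S K D a) ↑m = ((brak ↥S ↥N (restrictMap S N D h) a) m : K)
      rw [brak_apply, brak_apply, AddSubgroupClass.coe_sub]
      show D (a • ↑m) - a • D ↑m = ↑(restrictMap S N D h (a • m)) - ↑(a • restrictMap S N D h m)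
      rw [coe_smulN]
      show D (a • ↑m) - a • D ↑m = D ↑(a • m) - algebraMap ↥S K a * D ↑m
      rw [coe_smulN, Algebra.smul_def, Algebra.smul_def]
    rw [← e]
    exact ih (brak ↥S K D a) h' (hD a)

end Frac

/-- Let `K ⊇ ℂ` be a field, `A ⊆ K` a `ℂ`-subalgebra with `Frac(A) = K`,
and `M ⊆ K` a nonzero `A`-submodule.  Then the ring of differential operators `D_A(M)`
(defined inductively inside `End_ℂ(M)`) coincides with
`{D ∈ D(K) : D(f) ∈ M for all f ∈ M}`: every differential operator on `K` preserving
`M` restricts to a differential operator on `M`, and every differential operator on `M`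
arises this way from a unique such operator on `K`. -/
theorem diffops_on_submodule [IsFractionRing ↥S K] (hN : N ≠ ⊥) :
    (∀ (D : K →ₗ[ℂ] K) (_ : ∃ n, IsDiffOp ↥S K n D) (h : ∀ x ∈ N, D x ∈ N),
      ∃ n, IsDiffOp ↥S ↥N n (restrictMap S N D h)) ∧
    (∀ E : ↥N →ₗ[ℂ] ↥N, (∃ n, IsDiffOp ↥S ↥N n E) →
      ∃! D : K →ₗ[ℂ] K, (∃ n, IsDiffOp ↥S K n D) ∧
        ∃ h : ∀ x ∈ N, D x ∈ N, restrictMap S N D h = E) := by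
  constructor
  · rintro D ⟨n, hD⟩ h
    exact ⟨n, restrict_diffop S N n D h hD⟩
  · rintro E ⟨n, hE⟩
    obtain ⟨D, hDdiff, hDres⟩ := extend S N hN n E hE
    have hpres : ∀ x ∈ N, D x ∈ N := by
      intro x hx
      rw [hDres ⟨x, hx⟩]
      exact (E ⟨x, hx⟩).2
    refine ⟨D, ⟨⟨n, hDdiff⟩, ⟨hpres, ?_⟩⟩, ?_⟩
    · apply LinearMap.ext; intro m
      exact Subtype.coe_injective (hDres m)
    · rintro D' ⟨⟨n', hD'⟩, hpres', hres'⟩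
      refine ext_on S N hN hD' hDdiff ?_
      intro x hx
      have h1 : D' x = ↑(E ⟨x, hx⟩) := congrArg (fun T : ↥N →ₗ[ℂ] ↥N => ((T ⟨x, hx⟩ : ↥N) : K)) hres'
      rw [h1, ← hDres ⟨x, hx⟩]
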